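/- For n ≥ 2, the number of Grassmannian permutations π ∈ S_n whose cube π³ is the identity permutation equals C(⌊n/3⌋+3, 3) + C(⌊(n−1)/3⌋+3, 3) + C(⌊(n−2)/3⌋+3, 3) − n. -/

import Mathlib

set_option linter.unusedVariables false
set_option linter.unnecessarySeqFocus false
set_option linter.unreachableTactic false
set_option linter.unusedTactic false


def fblk (m s y : ℕ) : ℕ :=
  if y < s then y + s
  else if y < 2*s then y + m
  else if y < m + s then y + 2*m - s
  else if y < m + 2*s then y - (m+s)
  else if y < 2*m + s then y - m
  else y + s - m

variable {m s y : ℕ}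

lemma fblk1 (h : y < s) : fblk m s y = y + s := by unfold fblk; split_ifs <;> omega
lemma fblk2 (h1 : s ≤ y) (h2 : y < 2*s) : fblk m s y = y + m := by
  unfold fblk; split_ifs <;> omega
lemma fblk3' (hs : s ≤ m) (h1 : 2*s ≤ y) (h2 : y < m + s) : fblk m s y = y + 2*m - s := by
  unfold fblk; split_ifs <;> omega
lemma fblk4 (hs : s ≤ m) (h1 : m + s ≤ y) (h2 : y < m + 2*s) : fblk m s y = y - (m+s) := by
  unfold fblk; split_ifs <;> omega
lemma fblk5 (hs : s ≤ m) (h1 : m + 2*s ≤ y) (h2 : y < 2*m + s) : fblk m s y = y - m := by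
  unfold fblk; split_ifs <;> omega
lemma fblk6 (hs : s ≤ m) (h1 : 2*m + s ≤ y) : fblk m s y = y + s - m := by
  unfold fblk; split_ifs <;> omega

lemma fblk_lt (hs : s ≤ m) (hy : y < 3*m) : fblk m s y < 3*m := by
  unfold fblk; split_ifs <;> omega

lemma fblk_ne (hs : s ≤ m) (hm : 1 ≤ m) (hy : y < 3*m) : fblk m s y ≠ y := by
  unfold fblk; split_ifs <;> omega

lemma fblk_cube (hs : s ≤ m) (hy : y < 3*m) : fblk m s (fblk m s (fblk m s y)) = y := by
  rcases lt_or_ge y s with h | h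
  · have e1 : fblk m s y = y + s := fblk1 h
    have e2 : fblk m s (y+s) = y+s+m := fblk2 (by omega) (by omega)
    have e3 : fblk m s (y+s+m) = y+s+m-(m+s) := fblk4 hs (by omega) (by omega)
    rw [e1, e2, e3]; omega
  rcases lt_or_ge y (2*s) with h2 | h2
  · have e1 : fblk m s y = y + m := fblk2 h h2
    have e2 : fblk m s (y+m) = y+m-(m+s) := fblk4 hs (by omega) (by omega)
    have e3 : fblk m s (y+m-(m+s)) = y+m-(m+s)+s := fblk1 (by omega)
    rw [e1, e2, e3]; omega
  rcases lt_or_ge y (m+s) with h3 | h3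
  · have e1 : fblk m s y = y + 2*m - s := fblk3' hs h2 h3
    have e2 : fblk m s (y+2*m-s) = y+2*m-s+s-m := fblk6 hs (by omega)
    have e3 : fblk m s (y+2*m-s+s-m) = y+2*m-s+s-m-m := fblk5 hs (by omega) (by omega)
    rw [e1, e2, e3]; omega
  rcases lt_or_ge y (m+2*s) with h4 | h4
  · have e1 : fblk m s y = y - (m+s) := fblk4 hs h3 h4
    have e2 : fblk m s (y-(m+s)) = y-(m+s)+s := fblk1 (by omega)
    have e3 : fblk m s (y-(m+s)+s) = y-(m+s)+s+m := fblk2 (by omega) (by omega)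
    rw [e1, e2, e3]; omega
  rcases lt_or_ge y (2*m+s) with h5 | h5
  · have e1 : fblk m s y = y - m := fblk5 hs h4 h5
    have e2 : fblk m s (y-m) = y-m+2*m-s := fblk3' hs (by omega) (by omega)
    have e3 : fblk m s (y-m+2*m-s) = y-m+2*m-s+s-m := fblk6 hs (by omega)
    rw [e1, e2, e3]; omega
  · have e1 : fblk m s y = y + s - m := fblk6 hs h5
    have e2 : fblk m s (y+s-m) = y+s-m-m := fblk5 hs (by omega) (by omega)
    have e3 : fblk m s (y+s-m-m) = y+s-m-m+2*m-s := fblk3' hs (by omega) (by omega)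
    rw [e1, e2, e3]; omega


/-- A downward-closed subset of `[u, ∞)` bounded by `v` is an initial interval. -/
lemma initial_seg (S : Finset ℕ) (u v : ℕ) (hS : ∀ x ∈ S, u ≤ x ∧ x < v)
    (hdc : ∀ x y, u ≤ x → x < y → y ∈ S → x ∈ S) : S = Finset.Ico u (u + S.card) := by
  have h1 : S ⊆ Finset.Ico u (u + S.card) := by
    intro y hy
    rw [Finset.mem_Ico]
    refine ⟨(hS y hy).1, ?_⟩
    have hsub : Finset.Ico u (y+1) ⊆ S := by
      intro x hx
      rw [Finset.mem_Ico] at hx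
      rcases Nat.lt_or_ge x y with h | h
      · exact hdc x y hx.1 h hy
      · have : x = y := by omega
        rwa [this]
    have := Finset.card_le_card hsub
    rw [Nat.card_Ico] at this
    omega
  have h2 : Finset.Ico u (u + S.card) ⊆ S := by
    intro x hx
    rw [Finset.mem_Ico] at hx
    by_contra hxS
    have hsub : S ⊆ Finset.Ico u x := by
      intro y hy
      rw [Finset.mem_Ico]
      refine ⟨(hS y hy).1, ?_⟩
      rcases Nat.lt_or_ge y x with h | h
      · exact h
      · exfalso
        rcases Nat.eq_or_lt_of_le h with h' | h'
        · exact hxS (h' ▸ hy)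
        · exact hxS (hdc x y hx.1 h' hy)
    have := Finset.card_le_card hsub
    rw [Nat.card_Ico] at this
    omega
  exact Finset.Subset.antisymm h1 h2

/-- A strictly increasing map from `[u,v)` into an interval of the same length is a shift. -/
lemma shift_val {p : ℕ → ℕ} {u v u' : ℕ}
    (hmono : ∀ x y, u ≤ x → x < y → y < v → p x < p y)
    (himg : ∀ x, u ≤ x → x < v → u' ≤ p x ∧ p x < u' + (v - u)) :
    ∀ x, u ≤ x → x < v → p x = u' + (x - u) := by
  have low : ∀ j, u + j < v → u' + j ≤ p (u + j) := by
    intro j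
    induction j with
    | zero => intro h; simpa using (himg u le_rfl (by omega)).1
    | succ k ih =>
      intro h
      have h1 := ih (by omega)
      have h2 : p (u + k) < p (u + (k+1)) := hmono _ _ (by omega) (by omega) (by omega)
      omega
  have high : ∀ j, j < v - u → p (v - 1 - j) + j < u' + (v - u) := by
    intro j
    induction j with
    | zero =>
      intro h
      have := (himg (v-1) (by omega) (by omega)).2
      simp only [Nat.sub_zero]
      omega
    | succ k ih =>
      intro h
      have h1 := ih (by omega)
      have h2 : p (v - 1 - (k+1)) < p (v - 1 - k) :=
        hmono _ _ (by omega) (by omega) (by omega)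
      omega
  intro x hx hxv
  have l := low (x - u) (by omega)
  have h := high (v - 1 - x) (by omega)
  have e1 : u + (x - u) = x := by omega
  have e2 : v - 1 - (v - 1 - x) = x := by omega
  rw [e1] at l
  rw [e2] at h
  omega

/-- the global function: identity outside `[a, a+3m)`, block pattern inside. -/
def Fg (a m s x : ℕ) : ℕ := if a ≤ x ∧ x < a + 3*m then a + fblk m s (x - a) else x

variable {a m s x n : ℕ}

lemma Fg_out (h : ¬ (a ≤ x ∧ x < a + 3*m)) : Fg a m s x = x := if_neg h

lemma Fg_in (h1 : a ≤ x) (h2 : x < a + 3*m) : Fg a m s x = a + fblk m s (x - a) :=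
  if_pos ⟨h1, h2⟩

lemma Fg_mem (hs : s ≤ m) (h1 : a ≤ x) (h2 : x < a + 3*m) :
    a ≤ Fg a m s x ∧ Fg a m s x < a + 3*m := by
  rw [Fg_in h1 h2]
  have := fblk_lt hs (y := x - a) (by omega)
  omega

lemma Fg_cube (hs : s ≤ m) : Fg a m s (Fg a m s (Fg a m s x)) = x := by
  by_cases h : a ≤ x ∧ x < a + 3*m
  · have m1 := Fg_mem hs (x := x) h.1 h.2
    have m2 := Fg_mem hs (x := Fg a m s x) m1.1 m1.2
    rw [Fg_in m2.1 m2.2, Fg_in m1.1 m1.2, Fg_in h.1 h.2]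
    have e1 : a + fblk m s (x - a) - a = fblk m s (x - a) := by omega
    rw [e1]
    have e2 : a + fblk m s (fblk m s (x-a)) - a = fblk m s (fblk m s (x-a)) := by omega
    rw [e2, fblk_cube hs (by omega)]
    omega
  · rw [Fg_out h, Fg_out h, Fg_out h]

lemma Fg_ne (hs : s ≤ m) (hm : 1 ≤ m) (h1 : a ≤ x) (h2 : x < a + 3*m) :
    Fg a m s x ≠ x := by
  rw [Fg_in h1 h2]
  have := fblk_ne hs hm (y := x - a) (by omega)
  omega

lemma Fg_lt (hs : s ≤ m) (hn : a + 3*m ≤ n) (hx : x < n) : Fg a m s x < n := by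
  by_cases h : a ≤ x ∧ x < a + 3*m
  · have := Fg_mem hs h.1 h.2; omega
  · rw [Fg_out h]; exact hx

lemma Fg_descent (hs : s ≤ m) (hm : 1 ≤ m) {i : ℕ}
    (h : Fg a m s (i+1) < Fg a m s i) : i + 1 = a + m + s := by
  unfold Fg fblk at h
  split_ifs at h <;> omega

/-- the Grassmannian cube-identity permutation with parameters `(m, s, a)`. -/
def gperm (n a m s : ℕ) (hs : s ≤ m) (hn : a + 3*m ≤ n) : Equiv.Perm (Fin n) where
  toFun x := ⟨Fg a m s x, Fg_lt hs hn x.2⟩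
  invFun x := ⟨Fg a m s (Fg a m s x), Fg_lt hs hn (Fg_lt hs hn x.2)⟩
  left_inv x := by ext; exact Fg_cube hs
  right_inv x := by ext; exact Fg_cube hs

lemma gperm_apply (hs : s ≤ m) (hn : a + 3*m ≤ n) (x : Fin n) :
    (gperm n a m s hs hn x : ℕ) = Fg a m s x := rfl

lemma gperm_cube (hs : s ≤ m) (hn : a + 3*m ≤ n) : (gperm n a m s hs hn)^3 = 1 := by
  ext x
  have : ∀ y : Fin n, ((gperm n a m s hs hn)^3) y
      = gperm n a m s hs hn (gperm n a m s hs hn (gperm n a m s hs hn y)) := by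
    intro y; rw [pow_succ, pow_succ, pow_one]; rfl
  rw [this x]
  show Fg a m s (Fg a m s (Fg a m s x)) = (x : ℕ)
  exact Fg_cube hs

theorem classify {n d : ℕ} {p : ℕ → ℕ}
    (hcube : ∀ x, p (p (p x)) = x)
    (hplt : ∀ x, x < n → p x < n)
    (hpfix : ∀ x, n ≤ x → p x = x)
    (hmono : ∀ i, i + 1 < n → i ≠ d → p i < p (i+1))
    (hne : ∃ x, x < n ∧ p x ≠ x) :
    ∃ a m s, 1 ≤ m ∧ s ≤ m ∧ a + 3*m ≤ n ∧ ∀ x, p x = Fg a m s x := by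
  have pinj : Function.Injective p := by
    intro x y h
    have : p (p (p x)) = p (p (p y)) := by rw [h]
    rwa [hcube, hcube] at this
  -- strict monotonicity on stretches avoiding d
  have lt_lt : ∀ u v, u < v → v < n → (v ≤ d ∨ d < u) → p u < p v := by
    intro u v
    induction v with
    | zero => omega
    | succ w ih =>
      intro huv hv hside
      rcases Nat.eq_or_lt_of_le (Nat.le_of_lt_succ huv) with h | h
      · subst h
        exact hmono u hv (by omega)
      · have h1 : p u < p w := ih h (by omega) (by omega)
        have h2 : p w < p (w+1) := hmono w hv (by omega)
        omega
  obtain ⟨x₀, hx₀n, hx₀⟩ := hne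
  set S : Finset ℕ := (Finset.range n).filter (fun x => p x ≠ x) with hSdef
  have hSne : S.Nonempty := ⟨x₀, by simp [hSdef, hx₀n, hx₀]⟩
  set a := S.min' hSne with hadef
  set b := S.max' hSne with hbdef
  have haS : a ∈ S := S.min'_mem hSne
  have hbS : b ∈ S := S.max'_mem hSne
  have han : a < n := by simp [hSdef] at haS; exact haS.1
  have hpa_ne : p a ≠ a := by simp [hSdef] at haS; exact haS.2
  have hbn : b < n := by simp [hSdef] at hbS; exact hbS.1
  have hpb_ne : p b ≠ b := by simp [hSdef] at hbS; exact hbS.2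
  have hay : ∀ y, y < a → p y = y := by
    intro y hy
    by_contra h
    have : y ∈ S := by simp [hSdef]; exact ⟨by omega, h⟩
    have := S.min'_le y this
    omega
  have hby : ∀ y, b < y → p y = y := by
    intro y hy
    rcases Nat.lt_or_ge y n with h | h
    · by_contra hc
      have : y ∈ S := by simp [hSdef]; exact ⟨h, hc⟩
      have := S.le_max' y this
      omega
    · exact hpfix y h
  have hpa : a < p a := by
    rcases Nat.lt_trichotomy (p a) a with h | h | h
    · have := hay (p a) h
      exact absurd (pinj this) (by omega)
    · exact absurd h hpa_ne
    · exact h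
  have hpb : p b < b := by
    rcases Nat.lt_trichotomy (p b) b with h | h | h
    · exact h
    · exact absurd h hpb_ne
    · have := hby (p b) h
      exact absurd (pinj this) (by omega)
  have had : a ≤ d := by
    by_contra hc
    have up : ∀ j, a + j < n → a + j < p (a + j) := by
      intro j
      induction j with
      | zero => intro _; simpa using hpa
      | succ k ih =>
        intro h
        have h1 := ih (by omega)
        have h2 : p (a+k) < p (a+(k+1)) := by
          have := hmono (a+k) (by omega) (by omega)
          convert this using 2 <;> omega
        have := hplt (a + (k+1)) h
        omega
    have h1 := up (n - 1 - a) (by omega)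
    have h2 := hplt (a + (n-1-a)) (by omega)
    omega
  have hdb : d < b := by
    by_contra hc
    have down : ∀ j, j ≤ b → p (b - j) < b - j := by
      intro j
      induction j with
      | zero => intro _; simpa using hpb
      | succ k ih =>
        intro h
        have h1 := ih (by omega)
        have h2 : p (b - (k+1)) < p (b - k) := by
          have := hmono (b - (k+1)) (by omega) (by omega)
          convert this using 2 <;> omega
        omega
    have := down b (le_refl b)
    omega
  have hup : ∀ x, a ≤ x → x ≤ d → x < p x := by
    have key : ∀ j, a + j ≤ d → a + j < p (a + j) := by
      intro j
      induction j with
      | zero => intro _; simpa using hpa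
      | succ k ih =>
        intro h
        have h1 := ih (by omega)
        have h2 : p (a+k) < p (a+(k+1)) := by
          have := hmono (a+k) (by omega) (by omega)
          convert this using 2 <;> omega
        omega
    intro x hx1 hx2
    have := key (x - a) (by omega)
    have e : a + (x - a) = x := by omega
    rwa [e] at this
  have hdn : ∀ x, d < x → x ≤ b → p x < x := by
    have key : ∀ j, b - j > d → p (b - j) < b - j := by
      intro j
      induction j with
      | zero => intro _; simpa using hpb
      | succ k ih =>
        intro h
        have h1 := ih (by omega)
        have h2 : p (b - (k+1)) < p (b - k) := by
          have := hmono (b - (k+1)) (by omega) (by omega)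
          convert this using 2 <;> omega
        omega
    intro x hx1 hx2
    have := key (b - x) (by omega)
    have e : b - (b - x) = x := by omega
    rwa [e] at this
  have hrange : ∀ x, a ≤ x → x ≤ b → a ≤ p x ∧ p x ≤ b := by
    intro x hx1 hx2
    constructor
    · by_contra hc
      have h1 := hay (p x) (by omega)
      have := pinj h1
      omega
    · by_contra hc
      have h1 := hby (p x) (by omega)
      have := pinj h1
      omega
  -- the four structural sets
  set A : Finset ℕ := (Finset.Ico a (d+1)).filter (fun x => p x ≤ d) with hAdef
  have hAmem : ∀ x : ℕ, x ∈ A ↔ a ≤ x ∧ x ≤ d ∧ p x ≤ d := by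
    intro x
    rw [hAdef]
    simp only [Finset.mem_filter, Finset.mem_Ico]
    omega
  set al := A.card with haldef
  have hA : A = Finset.Ico a (a + al) := by
    apply initial_seg A a (d+1)
    · intro x hx
      rw [hAmem] at hx
      omega
    · intro x y hux hxy hyA
      rw [hAmem] at hyA ⊢
      have h1 : p x < p y := lt_lt x y hxy (by omega) (by omega)
      omega
  set D1 : Finset ℕ := (Finset.Ico (d+1) (b+1)).filter (fun x => p x ≤ d) with hD1def
  have hD1mem : ∀ x : ℕ, x ∈ D1 ↔ d < x ∧ x ≤ b ∧ p x ≤ d := by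
    intro x
    rw [hD1def]
    simp only [Finset.mem_filter, Finset.mem_Ico]
    omega
  set be := D1.card with hbedef
  have hD1 : D1 = Finset.Ico (d+1) (d+1+be) := by
    apply initial_seg D1 (d+1) (b+1)
    · intro x hx
      rw [hD1mem] at hx
      omega
    · intro x y hux hxy hyD
      rw [hD1mem] at hyD ⊢
      have h1 : p x < p y := lt_lt x y hxy (by omega) (by omega)
      omega
  -- key fact: images of A-chains
  have hApp : ∀ u ∈ A, d < p (p u) := by
    intro u hu
    rw [hAmem] at hu
    by_contra hc
    have h1 : u < p u := hup u hu.1 hu.2.1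
    have h2 : p u < p (p u) := hup (p u) (hrange u hu.1 (by omega)).1 hu.2.2
    have h3 : p (p u) < p (p (p u)) :=
      hup (p (p u)) (hrange (p u) (hrange u hu.1 (by omega)).1 (by
        have := hrange u hu.1 (by omega); omega)).1 (by omega)
    rw [hcube] at h3
    omega
  have hBD1 : ∀ u ∈ A, p (p u) ∈ D1 := by
    intro u hu
    have h1 := hApp u hu
    rw [hAmem] at hu
    have h2 := hrange u hu.1 (by omega)
    have h3 := hrange (p u) h2.1 h2.2
    rw [hD1mem]
    refine ⟨h1, h3.2, ?_⟩
    rw [hcube]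
    omega
  set B : Finset ℕ := A.image p with hBdef
  have hBcard : B.card = al := Finset.card_image_of_injective A pinj
  have hBsub : ∀ z ∈ B, a + al ≤ z ∧ z ≤ d := by
    intro z hz
    rw [hBdef, Finset.mem_image] at hz
    obtain ⟨u, huA, rfl⟩ := hz
    have happ := hApp u huA
    rw [hAmem] at huA
    have h2 := hrange u huA.1 (by omega)
    have hnotA : p u ∉ A := by
      rw [hAmem]
      push_neg
      intro _ _
      omega
    rw [hA, Finset.mem_Ico] at hnotA
    refine ⟨by omega, huA.2.2⟩
  have hB : B = Finset.Ico (a + al) (a + 2*al) := by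
    have := initial_seg B (a + al) (d+1)
      (by intro z hz; have := hBsub z hz; omega)
      (by
        intro x y hux hxy hyB
        -- y = p u for u ∈ A; p y ∈ D1
        have hyB' := hyB
        rw [hBdef, Finset.mem_image] at hyB'
        obtain ⟨u, huA, rfl⟩ := hyB'
        have hpuD1 := hBD1 u huA
        rw [hD1, Finset.mem_Ico] at hpuD1
        have hbnd := hBsub _ hyB
        -- x is not in A
        have hxd : x ≤ d := by omega
        have hxnA : x ∉ A := by
          rw [hA, Finset.mem_Ico]
          omega
        rw [hAmem] at hxnA
        push_neg at hxnA
        have hpxd : d < p x := hxnA (by omega) hxd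
        have hpxb : p x ≤ b := (hrange x (by omega) (by omega)).2
        have hmx : p x < p (p u) := lt_lt x (p u) hxy (by omega) (by omega)
        have hpxD1 : p x ∈ D1 := by
          rw [hD1, Finset.mem_Ico]
          omega
        rw [hD1mem] at hpxD1
        -- pre-image of x is p (p x) ∈ A
        have hpre : p (p x) ∈ A := by
          rw [hAmem]
          have h2 := hrange x (by omega) (by omega)
          have h3 := hrange (p x) h2.1 h2.2
          refine ⟨h3.1, hpxD1.2.2, ?_⟩
          rw [hcube]
          omega
        rw [hBdef, Finset.mem_image]
        exact ⟨p (p x), hpre, hcube x⟩)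
    rw [hBcard] at this
    rw [this]
    congr 1
    omega
  -- equation 1 : al + be = d + 1 - a
  have key1 : al + be = d + 1 - a := by
    have himgW : ((Finset.Ico a (b+1)).filter (fun x => p x ≤ d)).image p
        = Finset.Ico a (d+1) := by
      ext z
      simp only [Finset.mem_image, Finset.mem_filter, Finset.mem_Ico]
      constructor
      · rintro ⟨x, ⟨⟨hx1, hx2⟩, hx3⟩, rfl⟩
        have := hrange x hx1 (by omega)
        omega
      · rintro ⟨hz1, hz2⟩
        refine ⟨p (p z), ⟨⟨?_, ?_⟩, ?_⟩, hcube z⟩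
        · have h2 := hrange z hz1 (by omega)
          exact (hrange (p z) h2.1 h2.2).1
        · have h2 := hrange z hz1 (by omega)
          have := (hrange (p z) h2.1 h2.2).2
          omega
        · rw [hcube]; omega
    have hcardW : ((Finset.Ico a (b+1)).filter (fun x => p x ≤ d)).card = d + 1 - a := by
      have := Finset.card_image_of_injective
        ((Finset.Ico a (b+1)).filter (fun x => p x ≤ d)) pinj
      rw [himgW, Nat.card_Ico] at this
      omega
    have hsplit : (Finset.Ico a (b+1)).filter (fun x => p x ≤ d)
        = A ∪ D1 := by
      rw [hAdef, hD1def, ← Finset.filter_union]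
      congr 1
      rw [Finset.Ico_union_Ico_eq_Ico (by omega) (by omega)]
    have hdisj : Disjoint A D1 := by
      rw [hAdef, hD1def]
      exact Finset.disjoint_filter_filter (Finset.Ico_disjoint_Ico_consecutive a (d+1) (b+1))
    rw [hsplit, Finset.card_union_of_disjoint hdisj] at hcardW
    omega
  have hbeb : d + 1 + be ≤ b + 1 := by
    have h1 : D1 ⊆ Finset.Ico (d+1) (b+1) := by rw [hD1def]; exact Finset.filter_subset _ _
    have h2 := Finset.card_le_card h1
    rw [Nat.card_Ico] at h2
    omega
  set D2 : Finset ℕ := Finset.Ico (d+1+be) (b+1) with hD2def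
  have hD2mem : ∀ x : ℕ, x ∈ D2 ↔ d+1+be ≤ x ∧ x ≤ b := by
    intro x
    rw [hD2def]
    simp only [Finset.mem_Ico]
    omega
  -- elements of D2 map into D1
  have hD2p : ∀ x ∈ D2, d < p x ∧ p x ∈ D1 := by
    intro x hx
    rw [hD2mem] at hx
    have hxD1 : x ∉ D1 := by rw [hD1, Finset.mem_Ico]; omega
    rw [hD1mem] at hxD1
    push_neg at hxD1
    have hpx : d < p x := hxD1 (by omega) hx.2
    have hpxb := hrange x (by omega) hx.2
    have hppd : p (p x) ≤ d := by
      by_contra hc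
      have h1 : p x < x := hdn x (by omega) hx.2
      have h2 : p (p x) < p x := hdn (p x) hpx hpxb.2
      have h3 : p (p (p x)) < p (p x) := by
        apply hdn (p (p x)) (by omega)
        exact (hrange (p x) hpxb.1 hpxb.2).2
      rw [hcube] at h3
      omega
    refine ⟨hpx, ?_⟩
    rw [hD1mem]
    exact ⟨hpx, hpxb.2, hppd⟩
  -- N-chain fact : elements of U outside A and B have p (p ·) > d
  have hNpp : ∀ w, a ≤ w → w ≤ d → w ∉ A → w ∉ B → d < p (p w) := by
    intro w hw1 hw2 hwA hwB
    by_contra hc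
    have hr1 := hrange w hw1 (by omega)
    have hr2 := hrange (p w) hr1.1 hr1.2
    have hppwA : p (p w) ∈ A := by
      rw [hAmem]
      refine ⟨hr2.1, by omega, ?_⟩
      rw [hcube]
      exact hw2
    apply hwB
    rw [hBdef, Finset.mem_image]
    exact ⟨p (p w), hppwA, hcube w⟩
  -- the partition of D1
  have hPBsub : B.image p ⊆ D1 := by
    intro z hz
    rw [Finset.mem_image] at hz
    obtain ⟨x, hxB, rfl⟩ := hz
    rw [hBdef, Finset.mem_image] at hxB
    obtain ⟨u, huA, rfl⟩ := hxB
    exact hBD1 u huA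
  have hPD2sub : D2.image p ⊆ D1 := by
    intro z hz
    rw [Finset.mem_image] at hz
    obtain ⟨x, hxD2, rfl⟩ := hz
    exact (hD2p x hxD2).2
  have hD1cover : ∀ z ∈ D1, z ∈ B.image p ∨ z ∈ D2.image p := by
    intro z hz
    rw [hD1mem] at hz
    have hzab : a ≤ z := by omega
    have hr1 := hrange z hzab (by omega)
    have hr2 := hrange (p z) hr1.1 hr1.2
    have hwz : p (p (p z)) = z := hcube z
    rcases Nat.lt_or_ge d (p (p z)) with hw | hw
    · -- w ∈ D2
      right
      rw [Finset.mem_image]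
      refine ⟨p (p z), ?_, hwz⟩
      rw [hD2mem]
      have hnD1 : p (p z) ∉ D1 := by
        intro hmem
        rw [hD1mem] at hmem
        rw [hwz] at hmem
        omega
      rw [hD1, Finset.mem_Ico] at hnD1
      exact ⟨by omega, hr2.2⟩
    · -- w ∈ U : show w ∈ B
      left
      rw [Finset.mem_image]
      refine ⟨p (p z), ?_, hwz⟩
      have hwA : p (p z) ∉ A := by
        rw [hAmem]
        push_neg
        intro _ _
        rw [hwz]
        omega
      by_contra hwB
      have := hNpp (p (p z)) hr2.1 hw hwA hwB
      rw [hwz] at this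
      omega
  -- disjointness of the two image parts
  have hdisjP : Disjoint (B.image p) (D2.image p) := by
    rw [Finset.disjoint_left]
    intro z hz1 hz2
    rw [Finset.mem_image] at hz1 hz2
    obtain ⟨x, hxB, rfl⟩ := hz1
    obtain ⟨x', hx'D, hx'⟩ := hz2
    have := pinj hx'
    have h1 := hBsub x hxB
    rw [hD2mem] at hx'D
    omega
  have hD1eq : D1 = B.image p ∪ D2.image p := by
    apply Finset.Subset.antisymm
    · intro z hz
      rw [Finset.mem_union]
      exact hD1cover z hz
    · intro z hz
      rw [Finset.mem_union] at hz
      rcases hz with h | h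
      · exact hPBsub h
      · exact hPD2sub h
  have key2 : be = al + (b + 1 - (d + 1 + be)) := by
    have c1 : (B.image p).card = al := by
      rw [Finset.card_image_of_injective B pinj, hBcard]
    have c2 : (D2.image p).card = b + 1 - (d+1+be) := by
      rw [Finset.card_image_of_injective D2 pinj, hD2def, Nat.card_Ico]
    have hc := congrArg Finset.card hD1eq
    rw [Finset.card_union_of_disjoint hdisjP, c1, c2] at hc
    rw [hbedef]
    exact hc
  have h2al : a + 2*al ≤ d + 1 := by
    rcases Nat.eq_zero_or_pos al with h | h
    · omega
    · have hmem : a + 2*al - 1 ∈ B := by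
        rw [hB, Finset.mem_Ico]
        omega
      have := hBsub _ hmem
      omega
  have hb3 : b + 1 = a + 3*be := by omega
  have halbe : al ≤ be := by omega
  have hbe1 : 1 ≤ be := by omega
  -- p maps B.image p into A
  have hPBA : ∀ z ∈ B.image p, p z ∈ A := by
    intro z hz
    rw [Finset.mem_image] at hz
    obtain ⟨w, hwB, rfl⟩ := hz
    rw [hBdef, Finset.mem_image] at hwB
    obtain ⟨u, huA, rfl⟩ := hwB
    have : p (p (p u)) = u := hcube u
    rw [this]
    exact huA
  have hPB : B.image p = Finset.Ico (d+1) (d+1+al) := by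
    have hcardP : (B.image p).card = al := by
      rw [Finset.card_image_of_injective B pinj, hBcard]
    have := initial_seg (B.image p) (d+1) (d+1+be)
      (by
        intro z hz
        have := hPBsub hz
        rw [hD1, Finset.mem_Ico] at this
        omega)
      (by
        intro x y hux hxy hyP
        have hyD1 := hPBsub hyP
        rw [hD1, Finset.mem_Ico] at hyD1
        have hpyA := hPBA y hyP
        rw [hA, Finset.mem_Ico] at hpyA
        have hxD1 : x ∈ D1 := by
          rw [hD1, Finset.mem_Ico]
          omega
        rw [hD1mem] at hxD1
        have hr1 := hrange x (by omega) (by omega)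
        have hmx : p x < p y := lt_lt x y hxy (by omega) (by omega)
        have hpxA : p x ∈ A := by
          rw [hA, Finset.mem_Ico]
          omega
        have hppB : p (p x) ∈ B := by
          rw [hBdef]
          exact Finset.mem_image_of_mem p hpxA
        have : p (p (p x)) ∈ B.image p := Finset.mem_image_of_mem p hppB
        rwa [hcube] at this)
    rw [hcardP] at this
    exact this
  have hPD2 : D2.image p = Finset.Ico (d+1+al) (d+1+be) := by
    apply Finset.Subset.antisymm
    · intro z hz
      have hzD1 := hPD2sub hz
      rw [hD1, Finset.mem_Ico] at hzD1
      have hznPB : z ∉ B.image p := by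
        intro hc
        exact (Finset.disjoint_left.mp hdisjP) hc hz
      rw [hPB, Finset.mem_Ico] at hznPB
      rw [Finset.mem_Ico]
      omega
    · intro z hz
      rw [Finset.mem_Ico] at hz
      have hzD1 : z ∈ D1 := by
        rw [hD1, Finset.mem_Ico]
        omega
      rcases hD1cover z hzD1 with h | h
      · rw [hPB, Finset.mem_Ico] at h
        omega
      · exact h
  -- N maps into D2
  have hND2p : ∀ x, a + 2*al ≤ x → x < d+1 → p x ∈ D2 := by
    intro x hx1 hx2
    have hxnA : x ∉ A := by
      rw [hA, Finset.mem_Ico]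
      omega
    have hxnB : x ∉ B := by
      rw [hB, Finset.mem_Ico]
      omega
    have hxA' := hxnA
    rw [hAmem] at hxA'
    push_neg at hxA'
    have hpxd : d < p x := hxA' (by omega) (by omega)
    have hr1 := hrange x (by omega) (by omega)
    have hppd := hNpp x (by omega) (by omega) hxnA hxnB
    have hpxnD1 : p x ∉ D1 := by
      rw [hD1mem]
      push_neg
      intro _ _
      omega
    rw [hD1, Finset.mem_Ico] at hpxnD1
    rw [hD2mem]
    omega
  -- p maps D2.image p into N
  have hPD2N : ∀ z ∈ D2.image p, a + 2*al ≤ p z ∧ p z < d + 1 := by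
    intro z hz
    have hzD1 := hPD2sub hz
    rw [hD1mem] at hzD1
    rw [Finset.mem_image] at hz
    obtain ⟨w, hwD2, rfl⟩ := hz
    rw [hD2mem] at hwD2
    have hr1 := hrange w (by omega) (by omega)
    have hr2 := hrange (p w) hr1.1 hr1.2
    have hcw : p (p (p w)) = w := hcube w
    have hpznA : p (p w) ∉ A := by
      rw [hAmem]
      push_neg
      intro _ _
      rw [hcw]
      omega
    have hpznB : p (p w) ∉ B := by
      intro hc
      rw [hBdef, Finset.mem_image] at hc
      obtain ⟨u, huA, hu⟩ := hc
      have := pinj hu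
      rw [hAmem] at huA
      omega
    rw [hA, Finset.mem_Ico] at hpznA
    rw [hB, Finset.mem_Ico] at hpznB
    have : a ≤ p (p w) := hr2.1
    constructor
    · omega
    · omega
  -- the six region evaluations
  have hv1 : ∀ x, a ≤ x → x < a + al → p x = (a + al) + (x - a) := by
    apply shift_val
    · intro x y hx hxy hy
      exact lt_lt x y hxy (by omega) (by omega)
    · intro x hx1 hx2
      have hxA : x ∈ A := by rw [hA, Finset.mem_Ico]; omega
      have : p x ∈ B := by rw [hBdef]; exact Finset.mem_image_of_mem p hxA
      rw [hB, Finset.mem_Ico] at this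
      omega
  have hv2 : ∀ x, a + al ≤ x → x < a + 2*al → p x = (d+1) + (x - (a + al)) := by
    apply shift_val
    · intro x y hx hxy hy
      exact lt_lt x y hxy (by omega) (by omega)
    · intro x hx1 hx2
      have hxB : x ∈ B := by rw [hB, Finset.mem_Ico]; omega
      have : p x ∈ B.image p := Finset.mem_image_of_mem p hxB
      rw [hPB, Finset.mem_Ico] at this
      omega
  have hv3 : ∀ x, a + 2*al ≤ x → x < d + 1 → p x = (d+1+be) + (x - (a + 2*al)) := by
    apply shift_val
    · intro x y hx hxy hy
      exact lt_lt x y hxy (by omega) (by omega)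
    · intro x hx1 hx2
      have := hND2p x hx1 hx2
      rw [hD2mem] at this
      omega
  have hv4 : ∀ x, d+1 ≤ x → x < d+1+al → p x = a + (x - (d+1)) := by
    apply shift_val
    · intro x y hx hxy hy
      exact lt_lt x y hxy (by omega) (by omega)
    · intro x hx1 hx2
      have hxP : x ∈ B.image p := by rw [hPB, Finset.mem_Ico]; omega
      have := hPBA x hxP
      rw [hA, Finset.mem_Ico] at this
      omega
  have hv5 : ∀ x, d+1+al ≤ x → x < d+1+be → p x = (a + 2*al) + (x - (d+1+al)) := by
    apply shift_val
    · intro x y hx hxy hy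
      exact lt_lt x y hxy (by omega) (by omega)
    · intro x hx1 hx2
      have hxP : x ∈ D2.image p := by rw [hPD2, Finset.mem_Ico]; omega
      have := hPD2N x hxP
      omega
  have hv6 : ∀ x, d+1+be ≤ x → x < b+1 → p x = (d+1+al) + (x - (d+1+be)) := by
    apply shift_val
    · intro x y hx hxy hy
      exact lt_lt x y hxy (by omega) (by omega)
    · intro x hx1 hx2
      have hxD2 : x ∈ D2 := by rw [hD2mem]; omega
      have : p x ∈ D2.image p := Finset.mem_image_of_mem p hxD2
      rw [hPD2, Finset.mem_Ico] at this
      omega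
  -- assemble
  refine ⟨a, be, al, hbe1, halbe, by omega, ?_⟩
  intro x
  rcases Nat.lt_or_ge x a with hxa | hxa
  · rw [Fg_out (by omega), hay x hxa]
  rcases Nat.lt_or_ge x (a + 3*be) with hxb | hxb
  swap
  · rw [Fg_out (by omega), hby x (by omega)]
  rw [Fg_in hxa hxb]
  rcases Nat.lt_or_ge x (a + al) with h1 | h1
  · rw [fblk1 (show x - a < al by omega), hv1 x hxa h1]
    omega
  rcases Nat.lt_or_ge x (a + 2*al) with h2 | h2
  · rw [fblk2 (show al ≤ x - a by omega) (show x - a < 2*al by omega), hv2 x h1 h2]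
    omega
  rcases Nat.lt_or_ge x (d+1) with h3 | h3
  · rw [fblk3' halbe (show 2*al ≤ x - a by omega) (show x - a < be + al by omega),
      hv3 x h2 h3]
    omega
  rcases Nat.lt_or_ge x (d+1+al) with h4 | h4
  · rw [fblk4 halbe (show be + al ≤ x - a by omega) (show x - a < be + 2*al by omega),
      hv4 x h3 h4]
    omega
  rcases Nat.lt_or_ge x (d+1+be) with h5 | h5
  · rw [fblk5 halbe (show be + 2*al ≤ x - a by omega) (show x - a < 2*be + al by omega),
      hv5 x h4 h5]
    omega
  · rw [fblk6 halbe (show 2*be + al ≤ x - a by omega), hv6 x h5 (by omega)]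
    omega

/-- Number of descents of a permutation of `Fin n`
(indices `i` such that `π(i) > π(i+1)`). -/
def des {n : ℕ} (π : Equiv.Perm (Fin n)) : ℕ :=
  (Finset.univ.filter
    (fun i : Fin n => ∃ j : Fin n, (j : ℕ) = (i : ℕ) + 1 ∧ π j < π i)).card

lemma des_one {n : ℕ} : des (1 : Equiv.Perm (Fin n)) ≤ 1 := by
  have h : (Finset.univ.filter
      (fun i : Fin n => ∃ j : Fin n, (j : ℕ) = (i : ℕ) + 1 ∧ (1 : Equiv.Perm (Fin n)) j
        < (1 : Equiv.Perm (Fin n)) i)) = ∅ := by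
    apply Finset.filter_eq_empty_iff.mpr
    rintro i - ⟨j, hj1, hj2⟩
    simp only [Equiv.Perm.one_apply] at hj2
    rw [Fin.lt_def] at hj2
    omega
  rw [des, h]
  simp

lemma des_gperm {n a m s : ℕ} (hm : 1 ≤ m) (hs : s ≤ m) (hn : a + 3*m ≤ n) :
    des (gperm n a m s hs hn) ≤ 1 := by
  rw [des]
  apply Finset.card_le_one.mpr
  have key : ∀ i : Fin n, (∃ j : Fin n, (j : ℕ) = (i : ℕ) + 1 ∧
      gperm n a m s hs hn j < gperm n a m s hs hn i) → (i : ℕ) + 1 = a + m + s := by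
    rintro i ⟨j, hj1, hj2⟩
    rw [Fin.lt_def, gperm_apply, gperm_apply, hj1] at hj2
    exact Fg_descent hs hm hj2
  intro i hi j hj
  rw [Finset.mem_filter] at hi hj
  have h1 := key i hi.2
  have h2 := key j hj.2
  apply Fin.ext
  omega

lemma Fg_inj {n a m s a' m' s' : ℕ} (hm : 1 ≤ m) (hs : s ≤ m) (hn : a + 3*m ≤ n)
    (hm' : 1 ≤ m') (hs' : s' ≤ m') (hn' : a' + 3*m' ≤ n)
    (h : ∀ x, x < n → Fg a m s x = Fg a' m' s' x) :
    a = a' ∧ m = m' ∧ s = s' := by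
  have haa : a = a' := by
    by_contra hne
    rcases Nat.lt_or_ge a a' with hlt | hge
    · have h1 := h a (by omega)
      rw [Fg_out (show ¬(a' ≤ a ∧ a < a' + 3*m') by omega)] at h1
      exact Fg_ne hs hm (le_refl a) (by omega) h1
    · have hlt : a' < a := by omega
      have h1 := (h a' (by omega)).symm
      rw [Fg_out (show ¬(a ≤ a' ∧ a' < a + 3*m) by omega)] at h1
      exact Fg_ne hs' hm' (le_refl a') (by omega) h1
  subst haa
  have hmm : m = m' := by
    by_contra hne
    rcases Nat.lt_or_ge m m' with hlt | hge
    · have h1 := (h (a + 3*m) (by omega)).symm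
      rw [Fg_out (show ¬(a ≤ a + 3*m ∧ a + 3*m < a + 3*m) by omega)] at h1
      exact Fg_ne hs' hm' (by omega) (by omega) h1
    · have hlt : m' < m := by omega
      have h1 := h (a + 3*m') (by omega)
      rw [Fg_out (show ¬(a ≤ a + 3*m' ∧ a + 3*m' < a + 3*m') by omega)] at h1
      exact Fg_ne hs hm (by omega) (by omega) h1
  subst hmm
  refine ⟨rfl, rfl, ?_⟩
  have h1 := h a (by omega)
  rw [Fg_in (le_refl a) (by omega), Fg_in (le_refl a) (by omega)] at h1
  have h2 : fblk m s (a - a) = fblk m s' (a - a) := by omega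
  have ha : a - a = 0 := by omega
  rw [ha] at h2
  unfold fblk at h2
  split_ifs at h2 <;> omega

/-- total version of `gperm` for counting purposes -/
def gpermT (n : ℕ) (t : ℕ × ℕ × ℕ) : Equiv.Perm (Fin n) :=
  if h : t.2.2 ≤ t.2.1 ∧ t.1 + 3*t.2.1 ≤ n then gperm n t.1 t.2.1 t.2.2 h.1 h.2 else 1

lemma gpermT_eq {n a m s : ℕ} (hs : s ≤ m) (hn : a + 3*m ≤ n) :
    gpermT n (a, m, s) = gperm n a m s hs hn := dif_pos ⟨hs, hn⟩

lemma perm_classify {n : ℕ} (π : Equiv.Perm (Fin n)) (hdes : des π ≤ 1)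
    (hcube : π ^ 3 = 1) (hne : π ≠ 1) :
    ∃ a m s, 1 ≤ m ∧ s ≤ m ∧ a + 3*m ≤ n ∧
      ∀ v : Fin n, (π v : ℕ) = Fg a m s (v : ℕ) := by
  set p : ℕ → ℕ := fun x => if h : x < n then ((π ⟨x, h⟩ : Fin n) : ℕ) else x with hpdef
  have hp_apply : ∀ v : Fin n, p ↑v = ↑(π v) := by
    intro v
    show (if h : (v : ℕ) < n then ((π ⟨↑v, h⟩ : Fin n) : ℕ) else ↑v) = ↑(π v)
    rw [dif_pos v.isLt]
  have hplt : ∀ x, x < n → p x < n := by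
    intro x hx
    show (if h : x < n then ((π ⟨x, h⟩ : Fin n) : ℕ) else x) < n
    rw [dif_pos hx]
    exact (π ⟨x, hx⟩).isLt
  have hpfix : ∀ x, n ≤ x → p x = x := by
    intro x hx
    show (if h : x < n then ((π ⟨x, h⟩ : Fin n) : ℕ) else x) = x
    rw [dif_neg (by omega)]
  have happly : ∀ v : Fin n, π (π (π v)) = v := by
    intro v
    have e : (π ^ 3) v = π (π (π v)) := by
      rw [pow_succ, pow_succ, pow_one]
      rfl
    rw [hcube] at e
    exact e.symm
  have hcube3 : ∀ x, p (p (p x)) = x := by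
    intro x
    rcases Nat.lt_or_ge x n with hx | hx
    · have e0 : p x = ↑(π ⟨x, hx⟩) := hp_apply ⟨x, hx⟩
      rw [e0, hp_apply, hp_apply, happly]
    · have e0 : p x = x := hpfix x hx
      rw [e0, e0, e0]
  set Desc := Finset.univ.filter
    (fun i : Fin n => ∃ j : Fin n, (j : ℕ) = (i : ℕ) + 1 ∧ π j < π i) with hDdef
  have hdc : Desc.card ≤ 1 := hdes
  have hnod : ∀ i : ℕ, ∀ hi : i + 1 < n,
      (⟨i, by omega⟩ : Fin n) ∉ Desc → p i < p (i + 1) := by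
    intro i hi hnot
    have hno : ¬ (∃ j : Fin n, (j : ℕ) = ((⟨i, by omega⟩ : Fin n) : ℕ) + 1
        ∧ π j < π ⟨i, by omega⟩) := by
      intro hex
      exact hnot (Finset.mem_filter.mpr ⟨Finset.mem_univ _, hex⟩)
    push_neg at hno
    have h1 := hno ⟨i+1, hi⟩ rfl
    rw [Fin.le_def] at h1
    have h2 : π (⟨i, by omega⟩ : Fin n) ≠ π ⟨i+1, hi⟩ := by
      intro hEq
      have := π.injective hEq
      rw [Fin.mk.injEq] at this
      omega
    have h3 : ((π (⟨i, by omega⟩ : Fin n)) : ℕ) ≠ ((π ⟨i+1, hi⟩) : ℕ) := by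
      intro hEq
      exact h2 (Fin.ext hEq)
    have e1 : p i = ↑(π (⟨i, by omega⟩ : Fin n)) := hp_apply ⟨i, by omega⟩
    have e2 : p (i+1) = ↑(π (⟨i+1, hi⟩ : Fin n)) := hp_apply ⟨i+1, hi⟩
    rw [e1, e2]
    omega
  obtain ⟨d, hd⟩ : ∃ d : ℕ, ∀ i, i + 1 < n → i ≠ d → p i < p (i+1) := by
    rcases Finset.eq_empty_or_nonempty Desc with hD | ⟨d₀, hd₀⟩
    · exact ⟨n, fun i hi _ => hnod i hi (by rw [hD]; exact Finset.notMem_empty _)⟩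
    · refine ⟨↑d₀, fun i hi hne' => hnod i hi ?_⟩
      intro hmem
      have h2 := Finset.card_le_one.mp hdc _ hmem _ hd₀
      exact hne' (congrArg Fin.val h2)
  have hnex : ∃ x, x < n ∧ p x ≠ x := by
    have hv : ∃ v : Fin n, π v ≠ v := by
      by_contra hc
      push_neg at hc
      exact hne (Equiv.ext hc)
    obtain ⟨v, hv⟩ := hv
    refine ⟨↑v, v.isLt, ?_⟩
    rw [hp_apply]
    intro h
    exact hv (Fin.ext h)
  obtain ⟨a, m, s, hm, hs, h3, hp⟩ := classify hcube3 hplt hpfix hd hnex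
  refine ⟨a, m, s, hm, hs, h3, fun v => ?_⟩
  rw [← hp_apply v, hp ↑v]

def Params (n : ℕ) : Finset (ℕ × ℕ × ℕ) :=
  (Finset.Icc 1 (n/3)).biUnion (fun m =>
    (Finset.range (n+1-3*m) ×ˢ Finset.range (m+1)).image (fun q => (q.1, m, q.2)))

lemma Params_mem {n : ℕ} (t : ℕ × ℕ × ℕ) :
    t ∈ Params n ↔ 1 ≤ t.2.1 ∧ t.2.2 ≤ t.2.1 ∧ t.1 + 3*t.2.1 ≤ n := by
  obtain ⟨a, m, s⟩ := t
  simp only [Params, Finset.mem_biUnion, Finset.mem_Icc, Finset.mem_image,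
    Finset.mem_product, Finset.mem_range, Prod.mk.injEq]
  constructor
  · rintro ⟨m', ⟨hm1, hm2⟩, ⟨a', s'⟩, ⟨ha', hs'⟩, h1, h2, h3⟩
    subst h1; subst h2; subst h3
    refine ⟨hm1, by omega, by omega⟩
  · rintro ⟨h1, h2, h3⟩
    exact ⟨m, ⟨h1, by omega⟩, ⟨a, s⟩, ⟨by omega, by omega⟩, rfl, rfl, rfl⟩

lemma Params_card {n : ℕ} :
    (Params n).card = ∑ m ∈ Finset.Icc 1 (n/3), (n+1-3*m) * (m+1) := by
  rw [Params, Finset.card_biUnion]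
  · apply Finset.sum_congr rfl
    intro m hm
    rw [Finset.card_image_of_injective _ (fun q q' h => by
      simp only [Prod.mk.injEq] at h
      exact Prod.ext h.1 h.2.2)]
    rw [Finset.card_product, Finset.card_range, Finset.card_range]
  · intro m hm m' hm' hne
    rw [Function.onFun, Finset.disjoint_left]
    intro t ht1 ht2
    simp only [Finset.mem_image, Finset.mem_product, Finset.mem_range] at ht1 ht2
    obtain ⟨q, _, rfl⟩ := ht1
    obtain ⟨q', _, hq'⟩ := ht2
    simp only [Prod.mk.injEq] at hq'
    exact hne hq'.2.1.symm

lemma sum_closed (N : ℤ) (M : ℕ) :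
    2 * ∑ m ∈ Finset.Icc 1 M, ((N - 3*(m:ℤ)) * ((m:ℤ)+1))
      = N * M * (M+3) - 2 * M * (M+1) * (M+2) := by
  induction M with
  | zero => simp
  | succ k ih =>
    rw [Finset.sum_Icc_succ_top (by omega : 1 ≤ k+1)]
    push_cast
    push_cast at ih
    linear_combination ih

lemma choose3 (q : ℕ) : ((q+3).choose 3) * 6 = (q+1)*(q+2)*(q+3) := by
  have h := Nat.choose_mul_factorial_mul_factorial (show 3 ≤ q+3 by omega)
  have e : q + 3 - 3 = q := by omega
  rw [e] at h
  have h6 : Nat.factorial 3 = 6 := rfl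
  rw [h6] at h
  have hf : Nat.factorial (q+3) = (q+3)*((q+2)*((q+1)*(Nat.factorial q))) := by
    rw [show q+3 = (q+2)+1 from rfl, Nat.factorial_succ,
      show q+2 = (q+1)+1 from rfl, Nat.factorial_succ, Nat.factorial_succ]
  rw [hf] at h
  apply Nat.eq_of_mul_eq_mul_right (Nat.factorial_pos q)
  calc ((q+3).choose 3) * 6 * (Nat.factorial q)
      = (q+3)*((q+2)*((q+1)*(Nat.factorial q))) := h
    _ = (q+1)*(q+2)*(q+3)*(Nat.factorial q) := by ring

/-- The number of Grassmannian permutations of order dividing 3 (cube equal to identity). -/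
theorem count_grassmannian_cube_identity (n : ℕ) (hn : 2 ≤ n) :
    ((Finset.univ.filter (fun π : Equiv.Perm (Fin n) =>
        des π ≤ 1 ∧ π ^ 3 = 1)).card : ℤ)
      = ((n / 3 + 3).choose 3 : ℤ) + (((n - 1) / 3 + 3).choose 3 : ℤ)
        + (((n - 2) / 3 + 3).choose 3 : ℤ) - n := by
  classical
  have hset : Finset.univ.filter (fun π : Equiv.Perm (Fin n) => des π ≤ 1 ∧ π ^ 3 = 1)
      = insert 1 ((Params n).image (gpermT n)) := by
    apply Finset.Subset.antisymm
    · intro π hπ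
      rw [Finset.mem_filter] at hπ
      obtain ⟨-, h1, h2⟩ := hπ
      by_cases hid : π = 1
      · rw [hid]; exact Finset.mem_insert_self _ _
      · apply Finset.mem_insert_of_mem
        obtain ⟨a, m, s, hm, hs, h3, hp⟩ := perm_classify π h1 h2 hid
        rw [Finset.mem_image]
        refine ⟨(a, m, s), (Params_mem _).mpr ⟨hm, hs, h3⟩, ?_⟩
        rw [gpermT_eq hs h3]
        apply Equiv.ext
        intro v
        apply Fin.ext
        rw [gperm_apply, ← hp v]
    · intro π hπ
      rw [Finset.mem_insert] at hπ
      rw [Finset.mem_filter]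
      rcases hπ with rfl | hπ
      · exact ⟨Finset.mem_univ _, des_one, one_pow 3⟩
      · rw [Finset.mem_image] at hπ
        obtain ⟨⟨a, m, s⟩, ht, rfl⟩ := hπ
        rw [Params_mem] at ht
        obtain ⟨hm, hs, h3⟩ := ht
        rw [gpermT_eq hs h3]
        exact ⟨Finset.mem_univ _, des_gperm hm hs h3, gperm_cube hs h3⟩
  have hnotmem : (1 : Equiv.Perm (Fin n)) ∉ (Params n).image (gpermT n) := by
    rw [Finset.mem_image]
    rintro ⟨⟨a, m, s⟩, ht, hEq⟩
    rw [Params_mem] at ht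
    obtain ⟨hm, hs, h3⟩ := ht
    rw [gpermT_eq hs h3] at hEq
    have h4 := congrArg (fun σ : Equiv.Perm (Fin n) => ((σ ⟨a, by omega⟩ : Fin n) : ℕ)) hEq
    simp only [Equiv.Perm.one_apply] at h4
    rw [gperm_apply] at h4
    exact Fg_ne hs hm (le_refl a) (by omega) h4
  have hinj : Set.InjOn (gpermT n) (Params n) := by
    rintro ⟨a, m, s⟩ ht ⟨a', m', s'⟩ ht' hEq
    rw [Finset.mem_coe, Params_mem] at ht ht'
    obtain ⟨hm, hs, h3⟩ := ht
    obtain ⟨hm', hs', h3'⟩ := ht'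
    rw [gpermT_eq hs h3, gpermT_eq hs' h3'] at hEq
    have hptw : ∀ x, x < n → Fg a m s x = Fg a' m' s' x := by
      intro x hx
      have h4 := congrArg (fun σ : Equiv.Perm (Fin n) => ((σ ⟨x, hx⟩ : Fin n) : ℕ)) hEq
      simp only at h4
      rw [gperm_apply, gperm_apply] at h4
      exact h4
    obtain ⟨e1, e2, e3⟩ := Fg_inj hm hs h3 hm' hs' h3' hptw
    simp only [Prod.mk.injEq]
    exact ⟨e1, e2, e3⟩
  have hcard : (Finset.univ.filter (fun π : Equiv.Perm (Fin n) =>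
      des π ≤ 1 ∧ π ^ 3 = 1)).card
      = 1 + ∑ m ∈ Finset.Icc 1 (n/3), (n+1-3*m) * (m+1) := by
    rw [hset, Finset.card_insert_of_notMem hnotmem,
      Finset.card_image_of_injOn hinj, Params_card]
    omega
  rw [hcard]
  -- arithmetic
  set M := n / 3 with hMdef
  have hM3 : 3 * M ≤ n ∧ n < 3 * M + 3 := by omega
  have hcast : ((∑ m ∈ Finset.Icc 1 M, (n+1-3*m) * (m+1) : ℕ) : ℤ)
      = ∑ m ∈ Finset.Icc 1 M, (((n:ℤ) + 1 - 3*(m:ℤ)) * ((m:ℤ)+1)) := by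
    rw [Nat.cast_sum]
    apply Finset.sum_congr rfl
    intro m hm
    rw [Finset.mem_Icc] at hm
    have h3m : 3*m ≤ n := by omega
    rw [Nat.cast_mul, Nat.cast_sub (by omega : 3*m ≤ n+1)]
    push_cast
    ring
  have hsum := sum_closed ((n:ℤ) + 1) M
  have hA : ((M+3).choose 3 : ℤ) * 6 = ((M:ℤ)+1)*((M:ℤ)+2)*((M:ℤ)+3) := by
    exact_mod_cast congrArg (fun x : ℕ => (x : ℤ)) (choose3 M)
  push_cast [hcast]
  rcases (show n % 3 = 0 ∨ n % 3 = 1 ∨ n % 3 = 2 by omega) with hr | hr | hr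
  · -- n = 3M, M ≥ 1
    have hM1 : 1 ≤ M := by omega
    have e1 : (n-1)/3 + 3 = M + 2 := by omega
    have e2 : (n-2)/3 + 3 = M + 2 := by omega
    rw [e1, e2]
    have hB : ((M+2).choose 3 : ℤ) * 6 = (M:ℤ)*((M:ℤ)+1)*((M:ℤ)+2) := by
      have h := choose3 (M-1)
      rw [show M-1+3 = M+2 by omega, show M-1+1 = M by omega,
        show M-1+2 = M+1 by omega] at h
      exact_mod_cast congrArg (fun x : ℕ => (x : ℤ)) h
    have hzn : (n : ℤ) = 3*(M:ℤ) := by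
      have : n = 3*M := by omega
      exact_mod_cast congrArg (fun x : ℕ => (x : ℤ)) this
    rw [hzn] at hsum ⊢
    apply mul_left_cancel₀ (show (6:ℤ) ≠ 0 by norm_num)
    linear_combination 3*hsum - hA - 2*hB
  · -- n = 3M+1, M ≥ 1
    have hM1 : 1 ≤ M := by omega
    have e1 : (n-1)/3 + 3 = M + 3 := by omega
    have e2 : (n-2)/3 + 3 = M + 2 := by omega
    rw [e1, e2]
    have hB : ((M+2).choose 3 : ℤ) * 6 = (M:ℤ)*((M:ℤ)+1)*((M:ℤ)+2) := by
      have h := choose3 (M-1)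
      rw [show M-1+3 = M+2 by omega, show M-1+1 = M by omega,
        show M-1+2 = M+1 by omega] at h
      exact_mod_cast congrArg (fun x : ℕ => (x : ℤ)) h
    have hzn : (n : ℤ) = 3*(M:ℤ) + 1 := by
      have : n = 3*M + 1 := by omega
      exact_mod_cast congrArg (fun x : ℕ => (x : ℤ)) this
    rw [hzn] at hsum ⊢
    apply mul_left_cancel₀ (show (6:ℤ) ≠ 0 by norm_num)
    linear_combination 3*hsum - 2*hA - hB
  · -- n = 3M+2
    have e1 : (n-1)/3 + 3 = M + 3 := by omega
    have e2 : (n-2)/3 + 3 = M + 3 := by omega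
    rw [e1, e2]
    have hzn : (n : ℤ) = 3*(M:ℤ) + 2 := by
      have : n = 3*M + 2 := by omega
      exact_mod_cast congrArg (fun x : ℕ => (x : ℤ)) this
    rw [hzn] at hsum ⊢
    apply mul_left_cancel₀ (show (6:ℤ) ≠ 0 by norm_num)
    linear_combination 3*hsum - 3*hA
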